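/- arXiv:2209.06591 — 2 statements merged into one kernel-verified Lean document; each statement's English description precedes it below -/
import Mathlib

section
/- Let G be a multigraph and D a double circuit of the bicircular matroid B(G). Then the subgraph G[D] induced by D has no vertices of degree 1, and has at most 4 vertices of degree at least 3. -/
open Set Matroid

namespace Paper

variable {α : Type*}

/-- A circuit of a matroid: a minimal dependent set. -/
def IsCircuit (M : Matroid α) (C : Set α) : Prop :=
  M.Dep C ∧ ∀ x ∈ C, M.Indep (C \ {x})

/-- The rank of a set: the largest cardinality of an independent subset. -/
noncomputable def rk (M : Matroid α) (X : Set α) : ℕ :=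
  sSup {n : ℕ | ∃ I, I ⊆ X ∧ M.Indep I ∧ I.ncard = n}

/-- A double circuit: a (finite) set `D` with `r(D) = |D| - 2` such that deleting any
single element does not decrease the rank. -/
def DoubleCircuit (M : Matroid α) (D : Set α) : Prop :=
  D ⊆ M.E ∧ D.Finite ∧ rk M D + 2 = D.ncard ∧ ∀ d ∈ D, rk M (D \ {d}) = rk M D

/-- `P` is the circuit partition of `D`: a partition of `D` into nonempty classes such
that the circuits of `M` contained in `D` are exactly the complements (in `D`) of the
classes. -/
def IsCircuitPartition (M : Matroid α) (D : Set α) (P : Set (Set α)) : Prop :=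
  (∀ p ∈ P, p.Nonempty) ∧ (∀ p ∈ P, p ⊆ D) ∧ (∀ d ∈ D, ∃! p, p ∈ P ∧ d ∈ p) ∧
    ∀ C, (IsCircuit M C ∧ C ⊆ D) ↔ ∃ p ∈ P, C = D \ p

/-- A positive double circuit: one whose circuit partition has strictly more singular
(size-one) classes than multiple classes. -/
def PositiveDoubleCircuit (M : Matroid α) (D : Set α) : Prop :=
  DoubleCircuit M D ∧ ∃ P, IsCircuitPartition M D P ∧
    {p ∈ P | p.ncard ≠ 1}.ncard < {p ∈ P | p.ncard = 1}.ncard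

/-- A hyperplane (copoint): a maximal proper flat. -/
def IsHyperplane (M : Matroid α) (H : Set α) : Prop :=
  M.IsFlat H ∧ H ≠ M.E ∧ ∀ F, M.IsFlat F → H ⊂ F → F = M.E

/-- A coline: a flat of codimension two. -/
def IsColine (M : Matroid α) (L : Set α) : Prop :=
  M.IsFlat L ∧ rk M L + 2 = rk M M.E

/-- `P` is the copoint partition of the coline `L`: a partition of `M.E \ L` such that
the hyperplanes containing `L` are exactly the sets `L ∪ p` for classes `p`. -/
def IsCopointPartition (M : Matroid α) (L : Set α) (P : Set (Set α)) : Prop :=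
  (∀ p ∈ P, p.Nonempty) ∧ (∀ p ∈ P, p ⊆ M.E \ L) ∧ (∀ d ∈ M.E \ L, ∃! p, p ∈ P ∧ d ∈ p) ∧
    ∀ H, (IsHyperplane M H ∧ L ⊆ H) ↔ ∃ p ∈ P, H = L ∪ p

/-- A positive coline: one whose copoint partition has strictly more singular (size-one)
classes than multiple classes. -/
def PositiveColine (M : Matroid α) (L : Set α) : Prop :=
  IsColine M L ∧ ∃ P, IsCopointPartition M L P ∧
    {p ∈ P | p.ncard ≠ 1}.ncard < {p ∈ P | p.ncard = 1}.ncard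

/-- A simple matroid: no loops and no parallel pairs. -/
def SimpleM (M : Matroid α) : Prop :=
  (∀ e ∈ M.E, M.Indep {e}) ∧ ∀ e f, e ∈ M.E → f ∈ M.E → e ≠ f → M.Indep {e, f}

/-- A coloop: an element contained in every base. -/
def IsColoop (M : Matroid α) (e : α) : Prop :=
  e ∈ M.E ∧ ∀ B, M.IsBase B → e ∈ B

open Classical in
/-- The permutation of `α` exchanging `e` and `f`. -/
noncomputable def swapMap (e f : α) (x : α) : α :=
  if x = e then f else if x = f then e else x

/-- `e` and `f` are clones in `M` if exchanging them is an automorphism of `M`. -/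
def Clones (M : Matroid α) (e f : α) : Prop :=
  e ∈ M.E ∧ f ∈ M.E ∧ ∀ I, M.Indep I ↔ M.Indep (swapMap e f '' I)

/-- Contraction of a set, defined by duality with deletion. -/
noncomputable def contract (M : Matroid α) (C : Set α) : Matroid α := (M✶ ↾ (M.E \ C))✶

/-- Deletion of a set. -/
noncomputable def delete (M : Matroid α) (D : Set α) : Matroid α := M ↾ (M.E \ D)

/-- `N` is a minor of `M`. -/
def IsMinorOf (N M : Matroid α) : Prop :=
  ∃ C D, C ⊆ M.E ∧ D ⊆ M.E ∧ Disjoint C D ∧ N = Paper.delete (contract M C) D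

universe u
variable {α : Type u}



/-- A multigraph on vertex type `V` with edges labelled by elements of `E ⊆ α`. -/
structure Multigraph (V : Type*) (α : Type*) where
  E : Set α
  ends : α → Sym2 V

/-- The vertices incident with an edge set `D`. -/
def Multigraph.verts {V : Type*} (G : Multigraph V α) (D : Set α) : Set V :=
  {v | ∃ e ∈ D, v ∈ G.ends e}

/-- The degree of `v` in the subgraph with edge set `D` (loops count twice). -/
noncomputable def Multigraph.deg {V : Type*} (G : Multigraph V α) (D : Set α) (v : V) : ℕ :=
  {e ∈ D | v ∈ G.ends e ∧ ¬ (G.ends e).IsDiag}.ncard +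
    2 * {e ∈ D | G.ends e = Sym2.diag v}.ncard

/-- `M` is the bicircular matroid of `G`: an edge set is independent iff every component
of the induced subgraph contains at most one cycle; equivalently, iff every finite
subset `J` is incident with at least `|J|` vertices. -/
def IsBicircularOf {V : Type*} (G : Multigraph V α) (M : Matroid α) : Prop :=
  M.E = G.E ∧ ∀ I, M.Indep I ↔ I ⊆ G.E ∧ ∀ J ⊆ I, J.Finite → J.ncard ≤ (G.verts J).ncard

/-- `M` is a bicircular matroid. -/
def IsBicircular (M : Matroid α) : Prop :=
  ∃ (V : Type u) (G : Multigraph V α), IsBicircularOf G M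

/-- `G` has girth at least five: every nonempty set of at most four edges is incident
with strictly more vertices than it has edges (i.e. contains no cycle). -/
def GirthAtLeastFive {V : Type*} (G : Multigraph V α) : Prop :=
  ∀ J ⊆ G.E, J.Finite → J.Nonempty → J.ncard ≤ 4 → J.ncard < (G.verts J).ncard

/-!
A vertex of degree one in `G[D]` is the end of a pendant edge `d`; adding `d` to a maximum
independent subset of `D \ {d}` keeps it independent, because `d` brings a new vertex, so
`r(D) > r(D \ {d})`, which is impossible in a double circuit. Hence every vertex of `G[D]` has
degree at least two, and the handshake lemma gives
`2|V(G[D])| + #{v | deg v ≥ 3} ≤ 2|D| = 2 r(D) + 4 ≤ 2|V(G[D])| + 4`.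
-/

section Rank

variable {α : Type u} {M : Matroid α} {X I : Set α}

lemma bddAbove_indep_ncard (M : Matroid α) (hX : X.Finite) :
    BddAbove {n : ℕ | ∃ I, I ⊆ X ∧ M.Indep I ∧ I.ncard = n} :=
  ⟨X.ncard, by rintro n ⟨J, hJX, -, rfl⟩; exact ncard_le_ncard hJX hX⟩

lemma ncard_le_rk (hX : X.Finite) (hIX : I ⊆ X) (hI : M.Indep I) : I.ncard ≤ rk M X :=
  le_csSup (bddAbove_indep_ncard M hX) ⟨I, hIX, hI, rfl⟩

lemma exists_indep_ncard_eq_rk (M : Matroid α) (hX : X.Finite) :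
    ∃ I ⊆ X, M.Indep I ∧ I.ncard = rk M X :=
  Nat.sSup_mem (s := {n : ℕ | ∃ I, I ⊆ X ∧ M.Indep I ∧ I.ncard = n})
    ⟨0, ∅, empty_subset X, M.empty_indep, ncard_empty α⟩ (bddAbove_indep_ncard M hX)

end Rank

lemma Sym2.count_toMultiset {V : Type*} [DecidableEq V] (z : Sym2 V) (v : V) :
    z.toMultiset.count v =
      (if v ∈ z ∧ ¬ z.IsDiag then 1 else 0) + (if z = Sym2.diag v then 2 else 0) := by
  induction z using Sym2.ind with
  | _ a b =>
    by_cases hab : a = b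
    · subst hab
      by_cases hva : v = a
      · subst hva; simp [Sym2.toMultiset, Sym2.diag]
      · simp [Sym2.toMultiset, Sym2.diag, hva, Ne.symm hva]
    · have hdiag : s(a, b) ≠ Sym2.diag v := by
        rintro h
        rcases Sym2.eq_iff.mp h with ⟨rfl, rfl⟩ | ⟨rfl, rfl⟩ <;> exact hab rfl
      simp only [Sym2.toMultiset, Sym2.lift_mk, Sym2.mem_iff, Sym2.mk_isDiag_iff, hab,
        not_false_eq_true, and_true, hdiag, if_false, add_zero]
      by_cases hva : v = a <;> by_cases hvb : v = b <;> simp_all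

namespace Multigraph

variable {α : Type u} {V : Type*} (G : Multigraph V α) {D I : Set α} {v : V}

lemma verts_mono {A B : Set α} (h : A ⊆ B) : G.verts A ⊆ G.verts B :=
  fun _ ⟨e, he, hv⟩ => ⟨e, h he, hv⟩

lemma verts_finite (hD : D.Finite) : (G.verts D).Finite := by
  have : G.verts D = ⋃ e ∈ D, {v | v ∈ G.ends e} := by
    ext v; simp [Multigraph.verts]
  rw [this]
  exact hD.biUnion fun e _ => by
    simpa only [Sym2.mem_toMultiset] using (G.ends e).toMultiset.finite_toSet

lemma deg_eq_sum_count [DecidableEq V] (hD : D.Finite) (v : V) :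
    G.deg D v = ∑ e ∈ hD.toFinset, (G.ends e).toMultiset.count v := by
  have hfilter (p : α → Prop) [DecidablePred p] :
      {e ∈ D | p e}.ncard = ∑ e ∈ hD.toFinset, if p e then 1 else 0 := by
    rw [← Finset.card_filter, ← ncard_coe_finset]
    congr 1
    ext e
    simp
  simp only [Multigraph.deg, hfilter, Finset.mul_sum, ← Finset.sum_add_distrib,
    Sym2.count_toMultiset]
  refine Finset.sum_congr rfl fun e _ => ?_
  split_ifs <;> rfl

lemma deg_pos_iff (hD : D.Finite) : 0 < G.deg D v ↔ v ∈ G.verts D := by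
  classical
  simp [deg_eq_sum_count G hD, Finset.sum_pos_iff, Multiset.count_pos, Multigraph.verts]

lemma setOf_le_deg_subset_verts (hD : D.Finite) {k : ℕ} (hk : 0 < k) :
    {v | k ≤ G.deg D v} ⊆ G.verts D :=
  fun _ hv => (G.deg_pos_iff hD).mp (hk.trans_le hv)

lemma sum_deg_eq_two_mul_ncard (hD : D.Finite) {W : Finset V} (hW : G.verts D ⊆ W) :
    ∑ v ∈ W, G.deg D v = 2 * D.ncard := by
  classical
  have hends : ∀ e ∈ hD.toFinset, ∑ v ∈ W, (G.ends e).toMultiset.count v = 2 := by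
    intro e he
    rw [Multiset.sum_count_eq_card fun v hv =>
      hW ⟨e, hD.mem_toFinset.mp he, Sym2.mem_toMultiset.mp hv⟩, Sym2.card_toMultiset]
  calc ∑ v ∈ W, G.deg D v
      = ∑ e ∈ hD.toFinset, ∑ v ∈ W, (G.ends e).toMultiset.count v := by
        simp only [deg_eq_sum_count G hD]
        exact Finset.sum_comm
    _ = 2 * D.ncard := by
        rw [Finset.sum_congr rfl hends, Finset.sum_const, smul_eq_mul, mul_comm,
          ncard_eq_toFinset_card D hD]

lemma exists_pendant_edge_of_deg_eq_one (hD : D.Finite) (hv : G.deg D v = 1) :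
    ∃ d ∈ D, v ∈ G.ends d ∧ v ∉ G.verts (D \ {d}) := by
  classical
  obtain ⟨d, hdD, hvd⟩ := (G.deg_pos_iff hD).mp (hv ▸ Nat.one_pos)
  have hdD' : d ∈ hD.toFinset := hD.mem_toFinset.mpr hdD
  have hcount : 0 < (G.ends d).toMultiset.count v :=
    Multiset.count_pos.mpr (Sym2.mem_toMultiset.mpr hvd)
  rw [deg_eq_sum_count G hD, ← Finset.add_sum_erase _ _ hdD'] at hv
  have hrest : ∀ e ∈ hD.toFinset.erase d, (G.ends e).toMultiset.count v = 0 :=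
    Finset.sum_eq_zero_iff.mp (by omega)
  refine ⟨d, hdD, hvd, fun ⟨e, ⟨heD, hed⟩, hve⟩ => ?_⟩
  have := hrest e (Finset.mem_erase.mpr ⟨hed, hD.mem_toFinset.mpr heD⟩)
  exact Multiset.count_eq_zero.mp this (Sym2.mem_toMultiset.mpr hve)

lemma two_mul_ncard_verts_add_ncard_le (hD : D.Finite) (h1 : ∀ v, G.deg D v ≠ 1) :
    2 * (G.verts D).ncard + {v | 3 ≤ G.deg D v}.ncard ≤ 2 * D.ncard := by
  classical
  set W := (G.verts_finite hD).toFinset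
  have hT : {v | 3 ≤ G.deg D v} = ↑(W.filter fun v => 3 ≤ G.deg D v) := by
    ext v
    simpa [W] using fun h => G.setOf_le_deg_subset_verts hD (by norm_num) h
  have hdeg : ∀ v ∈ W, 2 + (if 3 ≤ G.deg D v then 1 else 0) ≤ G.deg D v := by
    intro v hv
    have := (G.deg_pos_iff hD).mpr ((G.verts_finite hD).mem_toFinset.mp hv)
    have := h1 v
    split_ifs <;> omega
  calc 2 * (G.verts D).ncard + {v | 3 ≤ G.deg D v}.ncard
      = ∑ v ∈ W, (2 + if 3 ≤ G.deg D v then 1 else 0) := by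
        rw [hT, ncard_coe_finset, ncard_eq_toFinset_card _ (G.verts_finite hD),
          Finset.sum_add_distrib, Finset.sum_const, smul_eq_mul, mul_comm,
          Finset.sum_boole, Nat.cast_id]
    _ ≤ ∑ v ∈ W, G.deg D v := Finset.sum_le_sum hdeg
    _ = 2 * D.ncard := G.sum_deg_eq_two_mul_ncard hD (by simp [W])

end Multigraph

namespace IsBicircularOf

variable {α : Type u} {V : Type*} {G : Multigraph V α} {M : Matroid α} {I X : Set α}

lemma indep_insert_of_notMem_verts (hGM : IsBicircularOf G M) (hI : M.Indep I) {d : α}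
    (hd : d ∈ G.E) {v : V} (hvd : v ∈ G.ends d) (hvI : v ∉ G.verts I) :
    M.Indep (insert d I) := by
  obtain ⟨hIE, hIverts⟩ := (hGM.2 I).mp hI
  refine (hGM.2 _).mpr ⟨insert_subset hd hIE, fun J hJ hJfin => ?_⟩
  by_cases hdJ : d ∈ J
  · have hJI : J \ {d} ⊆ I := fun x ⟨hxJ, hxd⟩ => (hJ hxJ).resolve_left hxd
    have hv : v ∉ G.verts (J \ {d}) := fun hv => hvI (G.verts_mono hJI hv)
    have hsub : insert v (G.verts (J \ {d})) ⊆ G.verts J :=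
      insert_subset ⟨d, hdJ, hvd⟩ (G.verts_mono sdiff_subset)
    calc J.ncard = (J \ {d}).ncard + 1 := (ncard_sdiff_singleton_add_one hdJ hJfin).symm
      _ ≤ (G.verts (J \ {d})).ncard + 1 := by
        gcongr; exact hIverts _ hJI hJfin.sdiff
      _ = (insert v (G.verts (J \ {d}))).ncard :=
        (ncard_insert_of_notMem hv (G.verts_finite hJfin.sdiff)).symm
      _ ≤ (G.verts J).ncard := ncard_le_ncard hsub (G.verts_finite hJfin)
  · exact hIverts J (fun x hx => (hJ hx).resolve_left (ne_of_mem_of_not_mem hx hdJ)) hJfin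

lemma rk_le_ncard_verts (hGM : IsBicircularOf G M) (hX : X.Finite) :
    rk M X ≤ (G.verts X).ncard := by
  obtain ⟨I, hIX, hI, hIrk⟩ := exists_indep_ncard_eq_rk M hX
  calc rk M X = I.ncard := hIrk.symm
    _ ≤ (G.verts I).ncard := ((hGM.2 I).mp hI).2 I subset_rfl (hX.subset hIX)
    _ ≤ (G.verts X).ncard := ncard_le_ncard (G.verts_mono hIX) (G.verts_finite hX)

end IsBicircularOf

lemma DoubleCircuit.deg_ne_one {α : Type u} {V : Type*} {G : Multigraph V α} {M : Matroid α}
    {D : Set α} (hD : DoubleCircuit M D) (hGM : IsBicircularOf G M) (v : V) :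
    G.deg D v ≠ 1 := by
  obtain ⟨hDE, hDfin, -, hdel⟩ := hD
  intro hv
  obtain ⟨d, hdD, hvd, hvD⟩ := G.exists_pendant_edge_of_deg_eq_one hDfin hv
  obtain ⟨I, hID, hI, hIrk⟩ := exists_indep_ncard_eq_rk M (hDfin.sdiff (t := {d}))
  have hdI : d ∉ I := fun h => (hID h).2 rfl
  have hIns : M.Indep (insert d I) :=
    hGM.indep_insert_of_notMem_verts hI (hGM.1 ▸ hDE hdD) hvd
      fun h => hvD (G.verts_mono hID h)
  have := ncard_le_rk hDfin (insert_subset hdD (hID.trans sdiff_subset)) hIns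
  rw [ncard_insert_of_notMem hdI (hDfin.sdiff.subset hID), hIrk, hdel d hdD] at this
  omega

/-- if `D` is a double circuit of the bicircular matroid of `G`, then the
subgraph `G[D]` has no vertices of degree one, and at most four vertices of
degree at least three. -/
theorem bicircular_double_circuit_degrees {α : Type u} {V : Type*}
    (G : Multigraph V α) (M : Matroid α) (hGM : IsBicircularOf G M)
    (D : Set α) (hD : DoubleCircuit M D) :
    (∀ v : V, G.deg D v ≠ 1) ∧
      {v : V | 3 ≤ G.deg D v}.Finite ∧ {v : V | 3 ≤ G.deg D v}.ncard ≤ 4 := by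
  have hdeg1 : ∀ v, G.deg D v ≠ 1 := hD.deg_ne_one hGM
  obtain ⟨-, hDfin, hrk, -⟩ := hD
  refine ⟨hdeg1, (G.verts_finite hDfin).subset
    (G.setOf_le_deg_subset_verts hDfin (by norm_num)), ?_⟩
  have hcount := G.two_mul_ncard_verts_add_ncard_le hDfin hdeg1
  have hverts := hGM.rk_le_ncard_verts hDfin
  omega

end Paper
end

section
/- For any matroid M, there exists a double circuit D of M with at least two singular classes in its circuit partition if and only if there exist two circuits C_1 and C_2 of M with |C_1 △ C_2| = 2. -/
open Set Matroid

namespace Paper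

variable {α : Type*}

/-! If `{a}` and `{b}` are singular classes of a double circuit `D`, then `D \ {a}` and `D \ {b}`
are circuits whose symmetric difference is `{a, b}`. Conversely, if `C₁ \ C₂ = {a}` and
`C₂ \ C₁ = {b}`, then `D = C₁ ∪ C₂` is spanned by the independent set `C₁ ∩ C₂` of size `|D| - 2`,
and every element of `D` lies on a circuit inside `D`, so `D` is a double circuit. Its circuit
partition consists of the complements of its circuits, among them `D \ C₂ = {a}` and
`D \ C₁ = {b}`. -/
lemma isCircuit_iff_isCircuit {M : Matroid α} {C : Set α} : IsCircuit M C ↔ M.IsCircuit C :=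
  isCircuit_iff_dep_forall_sdiff_singleton_indep.symm

section Rank

variable {M : Matroid α} [M.Finite] {X Y I C : Set α} {e : α}

lemma rk_eq_ncard_of_isBasis' (hI : M.IsBasis' I X) : rk M X = I.ncard := by
  refine IsGreatest.csSup_eq ⟨⟨I, hI.subset, hI.indep, rfl⟩, ?_⟩
  rintro _ ⟨J, hJX, hJ, rfl⟩
  have hle : J.encard ≤ I.encard := hI.encard_eq_eRk ▸ hJ.encard_le_eRk_of_subset hJX
  exact ENat.toNat_le_toNat hle (M.set_finite I hI.indep.subset_ground).encard_lt_top.ne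

lemma rk_eq_ncard_of_indep (hI : M.Indep I) : rk M I = I.ncard :=
  rk_eq_ncard_of_isBasis' hI.isBasis_self.isBasis'

lemma rk_eq_of_subset_closure (hXY : X ⊆ Y) (hYX : Y ⊆ M.closure X) : rk M Y = rk M X := by
  obtain ⟨I, hI⟩ := M.exists_isBasis' X
  have hIY : M.IsBasis I Y := hI.indep.isBasis_of_subset_of_subset_closure
    (hI.subset.trans hXY) (hI.closure_eq_closure ▸ hYX)
  rw [rk_eq_ncard_of_isBasis' hI, rk_eq_ncard_of_isBasis' hIY.isBasis']

lemma rk_sdiff_singleton_eq_of_isCircuit_subset (hX : X ⊆ M.E) (hC : M.IsCircuit C)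
    (hCX : C ⊆ X) (he : e ∈ C) : rk M (X \ {e}) = rk M X := by
  refine (rk_eq_of_subset_closure sdiff_subset fun x hx ↦ ?_).symm
  obtain rfl | hxe := eq_or_ne x e
  · exact M.closure_subset_closure (sdiff_subset_sdiff_left hCX)
      (hC.mem_closure_sdiff_singleton_of_mem he)
  · exact M.subset_closure _ (sdiff_subset.trans hX) ⟨hx, hxe⟩

/-- The circuit is the fundamental circuit of the one element outside a basis. -/
lemma existsUnique_isCircuit_subset_of_rk_add_one (hX : X ⊆ M.E) (h : rk M X + 1 = X.ncard) :
    ∃! C, C ⊆ X ∧ M.IsCircuit C := by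
  obtain ⟨I, hI⟩ := M.exists_isBasis X
  have hXfin : X.Finite := M.set_finite X hX
  obtain ⟨e, he⟩ : ∃ e, X \ I = {e} := by
    rw [← ncard_eq_one, ncard_sdiff' hI.subset hXfin, ← h, rk_eq_ncard_of_isBasis' hI.isBasis']
    omega
  have heX : e ∈ X := (he.symm.subset rfl).1
  have heI : e ∉ I := (he.symm.subset rfl).2
  have hXeI : X ⊆ insert e I := fun x hx ↦ by
    by_cases hxI : x ∈ I
    · exact .inr hxI
    · exact .inl (he.subset ⟨hx, hxI⟩)
  refine ⟨M.fundCircuit e I, ⟨?_, hI.indep.fundCircuit_isCircuit (hI.subset_closure heX) heI⟩,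
    fun C ⟨hCX, hC⟩ ↦ hC.eq_fundCircuit_of_subset hI.indep (hCX.trans hXeI)⟩
  exact (M.fundCircuit_subset_insert e I).trans (insert_subset heX hI.subset)

end Rank

lemma exists_sdiff_eq_singleton_of_ncard_symmDiff_eq_two {s t : Set α} (hst : ¬ s ⊆ t)
    (hts : ¬ t ⊆ s) (h : (symmDiff s t).ncard = 2) : ∃ a b, s \ t = {a} ∧ t \ s = {b} := by
  have hfin : (symmDiff s t).Finite := finite_of_ncard_pos (by omega)
  rw [Set.symmDiff_def] at h hfin
  have hsum := ncard_union_eq disjoint_sdiff_sdiff (hfin.subset subset_union_left)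
    (hfin.subset subset_union_right)
  have hs := (ncard_pos (hfin.subset subset_union_left)).2 (sdiff_nonempty.2 hst)
  have ht := (ncard_pos (hfin.subset subset_union_right)).2 (sdiff_nonempty.2 hts)
  obtain ⟨a, ha⟩ := ncard_eq_one.1 (show (s \ t).ncard = 1 by omega)
  obtain ⟨b, hb⟩ := ncard_eq_one.1 (show (t \ s).ncard = 1 by omega)
  exact ⟨a, b, ha, hb⟩

lemma symmDiff_sdiff_singleton_sdiff_singleton {s : Set α} {a b : α} (ha : a ∈ s) (hb : b ∈ s)
    (hab : a ≠ b) : symmDiff (s \ {a}) (s \ {b}) = {a, b} := by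
  ext x
  simp only [Set.mem_symmDiff, mem_sdiff, mem_singleton_iff, mem_insert_iff]
  grind

lemma two_le_ncard_sep_ncard_eq_one {P : Set (Set α)} {a b : α} (hP : P.Finite) (ha : {a} ∈ P)
    (hb : {b} ∈ P) (hab : a ≠ b) : 2 ≤ {p ∈ P | p.ncard = 1}.ncard := by
  rw [← ncard_pair (by simpa using hab : ({a} : Set α) ≠ {b})]
  exact ncard_le_ncard (insert_subset ⟨ha, ncard_singleton a⟩
    (singleton_subset_iff.2 ⟨hb, ncard_singleton b⟩)) (hP.sep _)

lemma IsCircuitPartition.finite {M : Matroid α} {D : Set α} {P : Set (Set α)}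
    (hP : IsCircuitPartition M D P) (hD : D.Finite) : P.Finite :=
  hD.finite_subsets.subset hP.2.1

lemma IsCircuitPartition.isCircuit_sdiff {M : Matroid α} {D : Set α} {P : Set (Set α)}
    {p : Set α} (hP : IsCircuitPartition M D P) (hp : p ∈ P) : IsCircuit M (D \ p) :=
  ((hP.2.2.2 _).2 ⟨p, hp, rfl⟩).1

section DoubleCircuit

variable {M : Matroid α} {D C C₁ C₂ : Set α} {a b d : α}

lemma DoubleCircuit.rk_sdiff_singleton_add_one (hD : DoubleCircuit M D) (hd : d ∈ D) :
    rk M (D \ {d}) + 1 = (D \ {d}).ncard := by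
  obtain ⟨-, -, hrk, hdel⟩ := hD
  rw [hdel d hd, ncard_sdiff_singleton_of_mem hd]
  omega

lemma DoubleCircuit.sdiff_nonempty_of_isCircuit [M.Finite] (hD : DoubleCircuit M D)
    (hC : M.IsCircuit C) (hCD : C ⊆ D) : (D \ C).Nonempty := by
  refine sdiff_nonempty.2 fun hDC ↦ ?_
  obtain ⟨d, hd⟩ : D.Nonempty := nonempty_of_ncard_ne_zero (by have := hD.2.2.1; omega)
  have hind : M.Indep (D \ {d}) := hCD.antisymm hDC ▸ hC.sdiff_singleton_indep (hDC hd)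
  have := hD.rk_sdiff_singleton_add_one hd
  rw [rk_eq_ncard_of_indep hind] at this
  omega

/-- Each `D \ {d}` has nullity one, hence contains exactly one circuit. -/
lemma DoubleCircuit.isCircuitPartition [M.Finite] (hD : DoubleCircuit M D) :
    IsCircuitPartition M D ((D \ ·) '' {C | C ⊆ D ∧ M.IsCircuit C}) := by
  refine ⟨?_, ?_, fun d hd ↦ ?_, fun C ↦ ?_⟩
  · rintro _ ⟨C, ⟨hCD, hC⟩, rfl⟩
    exact hD.sdiff_nonempty_of_isCircuit hC hCD
  · rintro _ ⟨C, -, rfl⟩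
    exact sdiff_subset
  · obtain ⟨C, ⟨hCD, hC⟩, huniq⟩ := existsUnique_isCircuit_subset_of_rk_add_one
      (sdiff_subset.trans hD.1) (hD.rk_sdiff_singleton_add_one hd)
    refine ⟨D \ C, ⟨⟨C, ⟨hCD.trans sdiff_subset, hC⟩, rfl⟩, hd, fun h ↦ (hCD h).2 rfl⟩, ?_⟩
    rintro _ ⟨⟨C', ⟨hC'D, hC'⟩, rfl⟩, hdC'⟩
    rw [huniq C' ⟨subset_sdiff_singleton hC'D hdC'.2, hC'⟩]
  · rw [isCircuit_iff_isCircuit]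
    constructor
    · rintro ⟨hC, hCD⟩
      exact ⟨D \ C, ⟨C, ⟨hCD, hC⟩, rfl⟩, (sdiff_sdiff_cancel_left hCD).symm⟩
    · rintro ⟨_, ⟨C', ⟨hC'D, hC'⟩, rfl⟩, rfl⟩
      rw [sdiff_sdiff_cancel_left hC'D]
      exact ⟨hC', hC'D⟩

lemma doubleCircuit_union_of_sdiff_eq_singleton [M.Finite] (h₁ : M.IsCircuit C₁)
    (h₂ : M.IsCircuit C₂) (ha : C₁ \ C₂ = {a}) (hb : C₂ \ C₁ = {b}) :
    DoubleCircuit M (C₁ ∪ C₂) := by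
  have hDE : C₁ ∪ C₂ ⊆ M.E := union_subset h₁.subset_ground h₂.subset_ground
  have haC₂ : a ∉ C₂ := (ha.symm.subset rfl).2
  have hbC₂ : b ∈ C₂ := (hb.symm.subset rfl).1
  have hK : C₁ \ {a} = C₂ \ {b} := by
    rw [← ha, ← hb, sdiff_sdiff_right_self, sdiff_sdiff_right_self, inter_comm]
  have hcl : C₁ ∪ C₂ ⊆ M.closure (C₂ \ {b}) :=
    union_subset (hK ▸ h₁.subset_closure_sdiff_singleton a) (h₂.subset_closure_sdiff_singleton b)
  have hrk : rk M (C₁ ∪ C₂) = (C₂ \ {b}).ncard := by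
    rw [rk_eq_of_subset_closure (sdiff_subset.trans subset_union_right) hcl,
      rk_eq_ncard_of_indep (h₂.sdiff_singleton_indep hbC₂)]
  have hcard : (C₁ ∪ C₂).ncard = (C₂ \ {b}).ncard + 2 := by
    rw [← sdiff_union_self, ha, singleton_union, ncard_insert_of_notMem haC₂ h₂.finite,
      ← ncard_sdiff_singleton_add_one hbC₂ h₂.finite]
  refine ⟨hDE, M.set_finite _ hDE, by omega, fun d hd ↦ ?_⟩
  rcases hd with hd | hd
  · exact rk_sdiff_singleton_eq_of_isCircuit_subset hDE h₁ subset_union_left hd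
  · exact rk_sdiff_singleton_eq_of_isCircuit_subset hDE h₂ subset_union_right hd

end DoubleCircuit

/-- `M` has a double circuit with at least two singular classes iff it has
two circuits whose symmetric difference has exactly two elements. -/
theorem double_circuit_two_singular_iff_circuits_symmdiff_two
    {α : Type*} (M : Matroid α) [M.Finite] :
    (∃ D P, DoubleCircuit M D ∧ IsCircuitPartition M D P ∧
        2 ≤ {p ∈ P | p.ncard = 1}.ncard) ↔
      ∃ C₁ C₂, IsCircuit M C₁ ∧ IsCircuit M C₂ ∧ (symmDiff C₁ C₂).ncard = 2 := by
  constructor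
  · rintro ⟨D, P, -, hP, hsingular⟩
    obtain ⟨p, ⟨hp, hp₁⟩, q, ⟨hq, hq₁⟩, hpq⟩ :=
      (one_lt_ncard (finite_of_ncard_pos (by omega))).1 hsingular
    obtain ⟨a, rfl⟩ := ncard_eq_one.1 hp₁
    obtain ⟨b, rfl⟩ := ncard_eq_one.1 hq₁
    have hab : a ≠ b := by rintro rfl; exact hpq rfl
    refine ⟨D \ {a}, D \ {b}, hP.isCircuit_sdiff hp, hP.isCircuit_sdiff hq, ?_⟩
    rw [symmDiff_sdiff_singleton_sdiff_singleton (hP.2.1 _ hp rfl) (hP.2.1 _ hq rfl) hab,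
      ncard_pair hab]
  · rintro ⟨C₁, C₂, h₁, h₂, h⟩
    rw [isCircuit_iff_isCircuit] at h₁ h₂
    have hne : C₁ ≠ C₂ := by rintro rfl; simp at h
    obtain ⟨a, b, ha, hb⟩ := exists_sdiff_eq_singleton_of_ncard_symmDiff_eq_two
      (fun h ↦ hne (h₁.eq_of_subset_isCircuit h₂ h))
      (fun h ↦ hne (h₂.eq_of_subset_isCircuit h₁ h).symm) h
    have hab : a ≠ b := by rintro rfl; exact (hb.symm.subset rfl).2 (ha.symm.subset rfl).1
    have hD := doubleCircuit_union_of_sdiff_eq_singleton h₁ h₂ ha hb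
    refine ⟨C₁ ∪ C₂, _, hD, hD.isCircuitPartition, two_le_ncard_sep_ncard_eq_one
      (hD.isCircuitPartition.finite hD.2.1)
      ⟨C₂, ⟨subset_union_right, h₂⟩, union_sdiff_right.trans ha⟩
      ⟨C₁, ⟨subset_union_left, h₁⟩, union_sdiff_left.trans hb⟩ hab⟩

end Paper
end
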